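/- arXiv:2206.06009 — 2 statements merged into one kernel-verified Lean document; each statement's English description precedes it below -/
import Mathlib

section
/- (Telescoping dynamics-difference identity) For any finite MDP with two transition kernels P and P' sharing the same initial distribution, any policy π, and discount γ∈[0,1): J(P',π) - J(P,π) = E_{τ∼P',π}[ Σ_{t=0}^∞ γ^t ( r(s_t,a_t,s_{t+1}) + γ V^{P,π}(s_{t+1}) - Q^{P,π}(s_t,a_t) ) ], where the trajectory τ is generated by π under the kernel P' while V and Q are computed under P. -/
open scoped BigOperators

variable {S A : Type*}

/-- `P` is a transition kernel: for each state-action pair, a probability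
distribution over next states. -/
def IsKernel [Fintype S] (P : S → A → S → ℝ) : Prop :=
  ∀ s a, (∀ s', 0 ≤ P s a s') ∧ ∑ s', P s a s' = 1

/-- `π` is a stochastic policy: for each state, a probability distribution over actions. -/
def IsPolicy [Fintype A] (π : S → A → ℝ) : Prop :=
  ∀ s, (∀ a, 0 ≤ π s a) ∧ ∑ a, π s a = 1

/-- `ρ` is a probability distribution over states. -/
def IsDist [Fintype S] (ρ : S → ℝ) : Prop :=
  (∀ s, 0 ≤ ρ s) ∧ ∑ s, ρ s = 1

/-- One step of the state-marginal evolution under kernel `P` and policy `π`. -/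
noncomputable def stepMarginal [Fintype S] [Fintype A]
    (P : S → A → S → ℝ) (π : S → A → ℝ) (μ : S → ℝ) : S → ℝ :=
  fun s' => ∑ s, μ s * ∑ a, π s a * P s a s'

/-- The time-`t` state marginal under kernel `P`, policy `π`, initial distribution `ρ`. -/
noncomputable def marginal [Fintype S] [Fintype A]
    (P : S → A → S → ℝ) (π : S → A → ℝ) (ρ : S → ℝ) : ℕ → S → ℝ
  | 0 => ρ
  | t + 1 => stepMarginal P π (marginal P π ρ t)

/-- Expected one-step reward when the current state is distributed according to `μ`. -/
noncomputable def expReward [Fintype S] [Fintype A]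
    (P : S → A → S → ℝ) (π : S → A → ℝ) (r : S → A → S → ℝ) (μ : S → ℝ) : ℝ :=
  ∑ s, μ s * ∑ a, π s a * ∑ s', P s a s' * r s a s'

/-- The expected discounted return `J(P, π)` with initial distribution `ρ`. -/
noncomputable def Jret [Fintype S] [Fintype A]
    (P : S → A → S → ℝ) (π : S → A → ℝ) (r : S → A → S → ℝ) (γ : ℝ) (ρ : S → ℝ) : ℝ :=
  ∑' t : ℕ, γ ^ t * expReward P π r (marginal P π ρ t)

/-- The value function `V^{P,π}(s)`: the return starting from state `s`. -/
noncomputable def Vval [Fintype S] [Fintype A] [DecidableEq S]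
    (P : S → A → S → ℝ) (π : S → A → ℝ) (r : S → A → S → ℝ) (γ : ℝ) (s : S) : ℝ :=
  Jret P π r γ (fun s' => if s' = s then 1 else 0)

/-- The state-action value function `Q^{P,π}(s,a)`. -/
noncomputable def Qval [Fintype S] [Fintype A] [DecidableEq S]
    (P : S → A → S → ℝ) (π : S → A → ℝ) (r : S → A → S → ℝ) (γ : ℝ) (s : S) (a : A) : ℝ :=
  ∑ s', P s a s' * (r s a s' + γ * Vval P π r γ s')

/-- The advantage function `A^{P,π}(s,a) = Q^{P,π}(s,a) - V^{P,π}(s)`. -/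
noncomputable def Aval [Fintype S] [Fintype A] [DecidableEq S]
    (P : S → A → S → ℝ) (π : S → A → ℝ) (r : S → A → S → ℝ) (γ : ℝ) (s : S) (a : A) : ℝ :=
  Qval P π r γ s a - Vval P π r γ s

section helper
variable [Fintype S] [Fintype A]

lemma isDist_step (P : S → A → S → ℝ) (π : S → A → ℝ) (μ : S → ℝ)
    (hP : IsKernel P) (hπ : IsPolicy π) (hμ : IsDist μ) : IsDist (stepMarginal P π μ) := by
  constructor
  · intro s'
    apply Finset.sum_nonneg; intro s _
    exact mul_nonneg (hμ.1 s) (Finset.sum_nonneg fun a _ =>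
      mul_nonneg ((hπ s).1 a) ((hP s a).1 s'))
  · unfold stepMarginal
    rw [Finset.sum_comm]
    calc ∑ s, ∑ s', μ s * ∑ a, π s a * P s a s'
        = ∑ s, μ s * ∑ a, π s a * ∑ s', P s a s' := by
          refine Finset.sum_congr rfl fun s _ => ?_
          rw [← Finset.mul_sum, Finset.sum_comm]
          congr 1
          exact Finset.sum_congr rfl fun a _ => (Finset.mul_sum _ _ _).symm
      _ = 1 := by
          simp only [(hP _ _).2, mul_one, (hπ _).2, mul_one]
          exact hμ.2

lemma isDist_marginal (P : S → A → S → ℝ) (π : S → A → ℝ) (ρ : S → ℝ)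
    (hP : IsKernel P) (hπ : IsPolicy π) (hρ : IsDist ρ) (t : ℕ) :
    IsDist (marginal P π ρ t) := by
  induction t with
  | zero => exact hρ
  | succ t ih => exact isDist_step P π _ hP hπ ih

lemma abs_expReward_le (P : S → A → S → ℝ) (π : S → A → ℝ) (r : S → A → S → ℝ)
    (μ : S → ℝ) (rmax : ℝ)
    (hP : IsKernel P) (hπ : IsPolicy π) (hμ : IsDist μ)
    (hr : ∀ s a s', |r s a s'| ≤ rmax) :
    |expReward P π r μ| ≤ rmax := by
  have key : ∀ s, |∑ a, π s a * ∑ s', P s a s' * r s a s'| ≤ rmax := by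
    intro s
    calc |∑ a, π s a * ∑ s', P s a s' * r s a s'|
        ≤ ∑ a, |π s a * ∑ s', P s a s' * r s a s'| := Finset.abs_sum_le_sum_abs _ _
      _ ≤ ∑ a, π s a * rmax := by
          refine Finset.sum_le_sum fun a _ => ?_
          rw [abs_mul, abs_of_nonneg ((hπ s).1 a)]
          refine mul_le_mul_of_nonneg_left ?_ ((hπ s).1 a)
          calc |∑ s', P s a s' * r s a s'| ≤ ∑ s', |P s a s' * r s a s'| :=
                Finset.abs_sum_le_sum_abs _ _
            _ ≤ ∑ s', P s a s' * rmax := by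
                refine Finset.sum_le_sum fun s' _ => ?_
                rw [abs_mul, abs_of_nonneg ((hP s a).1 s')]
                exact mul_le_mul_of_nonneg_left (hr s a s') ((hP s a).1 s')
            _ = rmax := by rw [← Finset.sum_mul, (hP s a).2, one_mul]
      _ = rmax := by rw [← Finset.sum_mul, (hπ s).2, one_mul]
  calc |expReward P π r μ| ≤ ∑ s, |μ s * ∑ a, π s a * ∑ s', P s a s' * r s a s'| :=
        Finset.abs_sum_le_sum_abs _ _
    _ ≤ ∑ s, μ s * rmax := by
        refine Finset.sum_le_sum fun s _ => ?_
        rw [abs_mul, abs_of_nonneg (hμ.1 s)]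
        exact mul_le_mul_of_nonneg_left (key s) (hμ.1 s)
    _ = rmax := by rw [← Finset.sum_mul, hμ.2, one_mul]

lemma summable_geom_bound {f : ℕ → ℝ} {C γ : ℝ} (hγ0 : 0 ≤ γ) (hγ1 : γ < 1)
    (hf : ∀ t, |f t| ≤ C * γ ^ t) : Summable f := by
  apply Summable.of_norm
  apply Summable.of_nonneg_of_le (fun t => norm_nonneg _) (fun t => hf t)
  exact (summable_geometric_of_lt_one hγ0 hγ1).mul_left C

lemma summable_J (P : S → A → S → ℝ) (π : S → A → ℝ) (r : S → A → S → ℝ)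
    (γ : ℝ) (ρ : S → ℝ) (rmax : ℝ)
    (hP : IsKernel P) (hπ : IsPolicy π) (hρ : IsDist ρ)
    (hγ0 : 0 ≤ γ) (hγ1 : γ < 1)
    (hr : ∀ s a s', |r s a s'| ≤ rmax) :
    Summable (fun t : ℕ => γ ^ t * expReward P π r (marginal P π ρ t)) := by
  refine summable_geom_bound hγ0 hγ1 (C := rmax) (fun t => ?_)
  rw [abs_mul, abs_of_nonneg (pow_nonneg hγ0 t), mul_comm]
  exact mul_le_mul_of_nonneg_right
    (abs_expReward_le P π r _ rmax hP hπ (isDist_marginal P π ρ hP hπ hρ t) hr)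
    (pow_nonneg hγ0 t)

lemma marginal_shift (P : S → A → S → ℝ) (π : S → A → ℝ) (ρ : S → ℝ) (t : ℕ) :
    marginal P π ρ (t + 1) = marginal P π (stepMarginal P π ρ) t := by
  induction t with
  | zero => rfl
  | succ t ih => show stepMarginal P π (marginal P π ρ (t+1)) = _; rw [ih]; rfl

lemma marginal_decomp [DecidableEq S] (P : S → A → S → ℝ) (π : S → A → ℝ)
    (μ : S → ℝ) (t : ℕ) (s'' : S) :
    marginal P π μ t s'' =
      ∑ s, μ s * marginal P π (fun s' => if s' = s then 1 else 0) t s'' := by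
  induction t generalizing s'' with
  | zero =>
    simp only [marginal]
    rw [Finset.sum_congr rfl (fun s _ => by rw [mul_ite, mul_one, mul_zero])]
    simp
  | succ t ih =>
    show stepMarginal P π (marginal P π μ t) s'' = _
    unfold stepMarginal
    calc ∑ s, marginal P π μ t s * ∑ a, π s a * P s a s''
        = ∑ s, ∑ s0, μ s0 * marginal P π (fun s' => if s' = s0 then 1 else 0) t s *
            ∑ a, π s a * P s a s'' := by
          refine Finset.sum_congr rfl fun s _ => ?_
          rw [ih, Finset.sum_mul]
      _ = ∑ s0, μ s0 * ∑ s, marginal P π (fun s' => if s' = s0 then 1 else 0) t s *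
            ∑ a, π s a * P s a s'' := by
          rw [Finset.sum_comm]
          refine Finset.sum_congr rfl fun s0 _ => ?_
          rw [Finset.mul_sum]
          exact Finset.sum_congr rfl fun s _ => by ring
      _ = _ := rfl

lemma isDist_delta [DecidableEq S] (s : S) :
    IsDist (fun s' => if s' = s then 1 else 0) := by
  constructor
  · intro s'; dsimp only; split <;> norm_num
  · simp

lemma expReward_decomp [DecidableEq S] (P : S → A → S → ℝ) (π : S → A → ℝ)
    (r : S → A → S → ℝ) (μ : S → ℝ) (t : ℕ) :
    expReward P π r (marginal P π μ t) =
      ∑ s, μ s * expReward P π r (marginal P π (fun s' => if s' = s then 1 else 0) t) := by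
  unfold expReward
  calc ∑ s0, marginal P π μ t s0 * ∑ a, π s0 a * ∑ s', P s0 a s' * r s0 a s'
      = ∑ s0, ∑ s, μ s * marginal P π (fun s' => if s' = s then 1 else 0) t s0 *
          (∑ a, π s0 a * ∑ s', P s0 a s' * r s0 a s') := by
        refine Finset.sum_congr rfl fun s0 _ => ?_
        rw [marginal_decomp P π μ t s0, Finset.sum_mul]
    _ = ∑ s, μ s * ∑ s0, marginal P π (fun s' => if s' = s then 1 else 0) t s0 *
          ∑ a, π s0 a * ∑ s', P s0 a s' * r s0 a s' := by
        rw [Finset.sum_comm]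
        refine Finset.sum_congr rfl fun s _ => ?_
        rw [Finset.mul_sum]
        exact Finset.sum_congr rfl fun s0 _ => by ring

lemma Jret_eq_sum_V [DecidableEq S] (P : S → A → S → ℝ) (π : S → A → ℝ)
    (r : S → A → S → ℝ) (γ : ℝ) (μ : S → ℝ) (rmax : ℝ)
    (hP : IsKernel P) (hπ : IsPolicy π)
    (hγ0 : 0 ≤ γ) (hγ1 : γ < 1)
    (hr : ∀ s a s', |r s a s'| ≤ rmax) :
    Jret P π r γ μ = ∑ s, μ s * Vval P π r γ s := by
  unfold Jret Vval Jret
  have hsumm : ∀ s : S, Summable (fun t : ℕ => μ s * (γ ^ t *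
      expReward P π r (marginal P π (fun s' => if s' = s then 1 else 0) t))) := by
    intro s
    exact (summable_J P π r γ _ rmax hP hπ (isDist_delta s) hγ0 hγ1 hr).mul_left (μ s)
  calc (∑' t : ℕ, γ ^ t * expReward P π r (marginal P π μ t))
      = ∑' t : ℕ, ∑ s, μ s * (γ ^ t *
          expReward P π r (marginal P π (fun s' => if s' = s then 1 else 0) t)) := by
        refine tsum_congr fun t => ?_
        rw [expReward_decomp, Finset.mul_sum]
        exact Finset.sum_congr rfl fun s _ => by ring
    _ = ∑ s, μ s * ∑' t : ℕ, γ ^ t *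
          expReward P π r (marginal P π (fun s' => if s' = s then 1 else 0) t) := by
        rw [Summable.tsum_finsetSum (fun s _ => hsumm s)]
        exact Finset.sum_congr rfl fun s _ => tsum_mul_left

set_option maxHeartbeats 1000000 in
lemma abs_V_le [DecidableEq S] (P : S → A → S → ℝ) (π : S → A → ℝ)
    (r : S → A → S → ℝ) (γ : ℝ) (rmax : ℝ) (s : S)
    (hP : IsKernel P) (hπ : IsPolicy π)
    (hγ0 : 0 ≤ γ) (hγ1 : γ < 1)
    (hr : ∀ s a s', |r s a s'| ≤ rmax) :
    |Vval P π r γ s| ≤ rmax * (1 - γ)⁻¹ := by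
  unfold Vval Jret
  have hs := summable_J P π r γ _ rmax hP hπ (isDist_delta s) hγ0 hγ1 hr
  have habs : ∀ t : ℕ, |γ ^ t * expReward P π r
      (marginal P π (fun s' => if s' = s then 1 else 0) t)| ≤ rmax * γ ^ t := by
    intro t
    rw [abs_mul, abs_of_nonneg (pow_nonneg hγ0 t), mul_comm]
    exact mul_le_mul_of_nonneg_right
      (abs_expReward_le P π r _ rmax hP hπ
        (isDist_marginal P π _ hP hπ (isDist_delta s) t) hr) (pow_nonneg hγ0 t)
  have hgs : Summable (fun t : ℕ => rmax * γ ^ t) :=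
    (summable_geometric_of_lt_one hγ0 hγ1).mul_left rmax
  have hgeo : (∑' t : ℕ, rmax * γ ^ t) = rmax * (1 - γ)⁻¹ := by
    rw [tsum_mul_left, tsum_geometric_of_lt_one hγ0 hγ1]
  have hns : Summable (fun t : ℕ => -(rmax * γ ^ t)) := hgs.neg
  rw [abs_le]
  constructor
  · have h := Summable.tsum_le_tsum (f := fun t : ℕ => -(rmax * γ ^ t))
      (g := fun t : ℕ => γ ^ t * expReward P π r
        (marginal P π (fun s' => if s' = s then 1 else 0) t))
      (fun t => neg_le_of_abs_le (habs t)) hns hs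
    rw [tsum_neg, hgeo] at h
    linarith
  · exact hgeo ▸ Summable.tsum_le_tsum (fun t => (abs_le.mp (habs t)).2) hs hgs

lemma Jret_step [DecidableEq S] (P : S → A → S → ℝ) (π : S → A → ℝ)
    (r : S → A → S → ℝ) (γ : ℝ) (μ : S → ℝ) (rmax : ℝ)
    (hP : IsKernel P) (hπ : IsPolicy π) (hμ : IsDist μ)
    (hγ0 : 0 ≤ γ) (hγ1 : γ < 1)
    (hr : ∀ s a s', |r s a s'| ≤ rmax) :
    Jret P π r γ μ = expReward P π r μ + γ * Jret P π r γ (stepMarginal P π μ) := by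
  unfold Jret
  rw [Summable.tsum_eq_zero_add (summable_J P π r γ μ rmax hP hπ hμ hγ0 hγ1 hr)]
  congr 1
  · simp [marginal]
  · rw [← tsum_mul_left]
    refine tsum_congr fun t => ?_
    rw [marginal_shift]
    ring

lemma bellman [DecidableEq S] (P : S → A → S → ℝ) (π : S → A → ℝ)
    (r : S → A → S → ℝ) (γ : ℝ) (rmax : ℝ) (s : S)
    (hP : IsKernel P) (hπ : IsPolicy π)
    (hγ0 : 0 ≤ γ) (hγ1 : γ < 1)
    (hr : ∀ s a s', |r s a s'| ≤ rmax) :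
    Vval P π r γ s = ∑ a, π s a * Qval P π r γ s a := by
  have hδ := isDist_delta (S := S) s
  have h1 := Jret_step P π r γ _ rmax hP hπ hδ hγ0 hγ1 hr
  have h2 := Jret_eq_sum_V P π r γ (stepMarginal P π (fun s' => if s' = s then 1 else 0))
      rmax hP hπ hγ0 hγ1 hr
  have hE : expReward P π r (fun s' => if s' = s then 1 else 0) =
      ∑ a, π s a * ∑ s', P s a s' * r s a s' := by
    unfold expReward
    rw [Finset.sum_congr rfl (fun s0 _ => by rw [ite_mul, one_mul, zero_mul]),
      Finset.sum_ite_eq' Finset.univ s]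
    simp
  have hstep : ∀ s'', stepMarginal P π (fun s' => if s' = s then 1 else 0) s'' =
      ∑ a, π s a * P s a s'' := by
    intro s''
    unfold stepMarginal
    rw [Finset.sum_congr rfl (fun s0 _ => by rw [ite_mul, one_mul, zero_mul]),
      Finset.sum_ite_eq' Finset.univ s]
    simp
  have hV : Vval P π r γ s = (∑ a, π s a * ∑ s', P s a s' * r s a s') +
      γ * ∑ s', (∑ a, π s a * P s a s') * Vval P π r γ s' := by
    rw [Vval, h1, h2, hE]
    congr 2
    exact Finset.sum_congr rfl fun s' _ => by rw [hstep]
  rw [hV]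
  unfold Qval
  have hswap : ∑ s', (∑ a, π s a * P s a s') * Vval P π r γ s' =
      ∑ a, π s a * ∑ s', P s a s' * Vval P π r γ s' := by
    calc ∑ s', (∑ a, π s a * P s a s') * Vval P π r γ s'
        = ∑ s', ∑ a, π s a * P s a s' * Vval P π r γ s' := by
          exact Finset.sum_congr rfl fun s' _ => Finset.sum_mul _ _ _
      _ = ∑ a, ∑ s', π s a * P s a s' * Vval P π r γ s' := Finset.sum_comm
      _ = ∑ a, π s a * ∑ s', P s a s' * Vval P π r γ s' := by
          refine Finset.sum_congr rfl fun a _ => ?_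
          rw [Finset.mul_sum]
          exact Finset.sum_congr rfl fun s' _ => by ring
  rw [hswap, Finset.mul_sum, ← Finset.sum_add_distrib]
  refine Finset.sum_congr rfl fun a _ => ?_
  conv_rhs => rw [Finset.mul_sum]
  rw [Finset.mul_sum, Finset.mul_sum, Finset.mul_sum, ← Finset.sum_add_distrib]
  exact Finset.sum_congr rfl fun s' _ => by ring

lemma sum_step_V (P' : S → A → S → ℝ) (π : S → A → ℝ) (μ : S → ℝ) (V : S → ℝ) :
    ∑ s', stepMarginal P' π μ s' * V s' =
      ∑ s, μ s * ∑ a, π s a * ∑ s', P' s a s' * V s' := by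
  unfold stepMarginal
  calc ∑ s', (∑ s, μ s * ∑ a, π s a * P' s a s') * V s'
      = ∑ s', ∑ s, μ s * (∑ a, π s a * P' s a s') * V s' := by
        refine Finset.sum_congr rfl fun s' _ => ?_
        rw [Finset.sum_mul]
    _ = ∑ s, ∑ s', μ s * (∑ a, π s a * P' s a s') * V s' := Finset.sum_comm
    _ = _ := by
      refine Finset.sum_congr rfl fun s _ => ?_
      calc ∑ s', μ s * (∑ a, π s a * P' s a s') * V s'
          = ∑ s', ∑ a, μ s * (π s a * P' s a s' * V s') := by
            refine Finset.sum_congr rfl fun s' _ => ?_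
            rw [Finset.mul_sum, Finset.sum_mul]
            exact Finset.sum_congr rfl fun a _ => by ring
        _ = ∑ a, ∑ s', μ s * (π s a * P' s a s' * V s') := Finset.sum_comm
        _ = μ s * ∑ a, π s a * ∑ s', P' s a s' * V s' := by
            rw [Finset.mul_sum]
            refine Finset.sum_congr rfl fun a _ => ?_
            rw [Finset.mul_sum, Finset.mul_sum]
            exact Finset.sum_congr rfl fun s' _ => by ring

end helper

set_option maxHeartbeats 4000000

/-- telescoping dynamics-difference identity:
`J(P',π) - J(P,π) = E_{τ∼P',π}[Σ_t γ^t (r_t + γ V^{P,π}(s_{t+1}) - Q^{P,π}(s_t,a_t))]`. -/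
theorem dynamics_difference [Fintype S] [Fintype A] [DecidableEq S]
    (P P' : S → A → S → ℝ) (π : S → A → ℝ) (r : S → A → S → ℝ) (γ : ℝ) (ρ : S → ℝ)
    (rmax : ℝ)
    (hP : IsKernel P) (hP' : IsKernel P') (hπ : IsPolicy π) (hρ : IsDist ρ)
    (hγ0 : 0 ≤ γ) (hγ1 : γ < 1)
    (hr : ∀ s a s', |r s a s'| ≤ rmax) :
    Jret P' π r γ ρ - Jret P π r γ ρ =
      ∑' t : ℕ, γ ^ t * ∑ s, marginal P' π ρ t s * ∑ a, π s a *
        ∑ s', P' s a s' * (r s a s' + γ * Vval P π r γ s' - Qval P π r γ s a) := by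
  have hS : Nonempty S := by
    by_contra h
    rw [not_nonempty_iff] at h
    have h2 := hρ.2
    rw [Finset.univ_eq_empty, Finset.sum_empty] at h2
    norm_num at h2
  obtain ⟨s0⟩ := hS
  have hA : Nonempty A := by
    by_contra h
    rw [not_nonempty_iff] at h
    have h2 := (hπ s0).2
    rw [Finset.univ_eq_empty, Finset.sum_empty] at h2
    norm_num at h2
  obtain ⟨a0⟩ := hA
  have hrm : 0 ≤ rmax := le_trans (abs_nonneg _) (hr s0 a0 s0)
  set W : ℕ → ℝ := fun t => ∑ s, marginal P' π ρ t s * Vval P π r γ s with hWdef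
  have hdist : ∀ t, IsDist (marginal P' π ρ t) := isDist_marginal P' π ρ hP' hπ hρ
  have hVb : ∀ s, |Vval P π r γ s| ≤ rmax * (1 - γ)⁻¹ := fun s =>
    abs_V_le P π r γ rmax s hP hπ hγ0 hγ1 hr
  have hWb : ∀ t, |W t| ≤ rmax * (1 - γ)⁻¹ := by
    intro t
    calc |W t| ≤ ∑ s, |marginal P' π ρ t s * Vval P π r γ s| := Finset.abs_sum_le_sum_abs _ _
      _ ≤ ∑ s, marginal P' π ρ t s * (rmax * (1 - γ)⁻¹) := by
          refine Finset.sum_le_sum fun s _ => ?_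
          rw [abs_mul, abs_of_nonneg ((hdist t).1 s)]
          exact mul_le_mul_of_nonneg_left (hVb s) ((hdist t).1 s)
      _ = rmax * (1 - γ)⁻¹ := by rw [← Finset.sum_mul, (hdist t).2, one_mul]
  have hinner : ∀ t, (∑ s, marginal P' π ρ t s * ∑ a, π s a *
      ∑ s', P' s a s' * (r s a s' + γ * Vval P π r γ s' - Qval P π r γ s a))
      = expReward P' π r (marginal P' π ρ t) + γ * W (t + 1) - W t := by
    intro t
    have key : ∀ s a, ∑ s', P' s a s' * (r s a s' + γ * Vval P π r γ s' - Qval P π r γ s a)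
        = (∑ s', P' s a s' * r s a s') + γ * (∑ s', P' s a s' * Vval P π r γ s')
          - Qval P π r γ s a := by
      intro s a
      have h1 : ∑ s', P' s a s' * (r s a s' + γ * Vval P π r γ s' - Qval P π r γ s a)
          = ∑ s', (P' s a s' * r s a s' + γ * (P' s a s' * Vval P π r γ s')
            - P' s a s' * Qval P π r γ s a) :=
        Finset.sum_congr rfl fun s' _ => by ring
      rw [h1, Finset.sum_sub_distrib, Finset.sum_add_distrib, ← Finset.mul_sum,
        ← Finset.sum_mul, (hP' s a).2, one_mul]
    have key2 : ∀ s, ∑ a, π s a *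
        ∑ s', P' s a s' * (r s a s' + γ * Vval P π r γ s' - Qval P π r γ s a)
        = (∑ a, π s a * ∑ s', P' s a s' * r s a s')
          + γ * (∑ a, π s a * ∑ s', P' s a s' * Vval P π r γ s') - Vval P π r γ s := by
      intro s
      have h2 : ∀ a, π s a *
          ∑ s', P' s a s' * (r s a s' + γ * Vval P π r γ s' - Qval P π r γ s a)
          = π s a * (∑ s', P' s a s' * r s a s')
            + γ * (π s a * ∑ s', P' s a s' * Vval P π r γ s')
            - π s a * Qval P π r γ s a := fun a => by rw [key s a]; ring
      rw [Finset.sum_congr rfl (fun a _ => h2 a), Finset.sum_sub_distrib,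
        Finset.sum_add_distrib, ← Finset.mul_sum,
        ← bellman P π r γ rmax s hP hπ hγ0 hγ1 hr]
    calc ∑ s, marginal P' π ρ t s * ∑ a, π s a *
          ∑ s', P' s a s' * (r s a s' + γ * Vval P π r γ s' - Qval P π r γ s a)
        = ∑ s, (marginal P' π ρ t s * (∑ a, π s a * ∑ s', P' s a s' * r s a s')
            + γ * (marginal P' π ρ t s * ∑ a, π s a * ∑ s', P' s a s' * Vval P π r γ s')
            - marginal P' π ρ t s * Vval P π r γ s) := by
          refine Finset.sum_congr rfl fun s _ => ?_
          rw [key2 s]; ring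
      _ = expReward P' π r (marginal P' π ρ t) + γ * W (t + 1) - W t := by
          rw [Finset.sum_sub_distrib, Finset.sum_add_distrib, ← Finset.mul_sum]
          have hWs : W (t + 1) = ∑ s, marginal P' π ρ t s *
              ∑ a, π s a * ∑ s', P' s a s' * Vval P π r γ s' := by
            show (∑ s', marginal P' π ρ (t + 1) s' * Vval P π r γ s') = _
            rw [show marginal P' π ρ (t + 1) = stepMarginal P' π (marginal P' π ρ t) from rfl,
              sum_step_V]
          rw [hWs]
          rfl
  have hE'sum : Summable (fun t : ℕ => γ ^ t * expReward P' π r (marginal P' π ρ t)) :=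
    summable_J P' π r γ ρ rmax hP' hπ hρ hγ0 hγ1 hr
  have hg : Summable (fun t : ℕ => γ ^ t * W t) :=
    summable_geom_bound hγ0 hγ1 (C := rmax * (1 - γ)⁻¹) (fun t => by
      rw [abs_mul, abs_of_nonneg (pow_nonneg hγ0 t)]
      calc γ ^ t * |W t| ≤ γ ^ t * (rmax * (1 - γ)⁻¹) :=
            mul_le_mul_of_nonneg_left (hWb t) (pow_nonneg hγ0 t)
        _ = rmax * (1 - γ)⁻¹ * γ ^ t := mul_comm _ _)
  have hg1 : Summable (fun t : ℕ => γ ^ (t + 1) * W (t + 1)) :=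
    (summable_nat_add_iff 1).mpr hg
  have htel : ∑' t : ℕ, (γ ^ (t + 1) * W (t + 1) - γ ^ t * W t) = -W 0 := by
    rw [Summable.tsum_sub hg1 hg, Summable.tsum_eq_zero_add hg]
    simp only [pow_zero, one_mul]
    ring
  have hJP : Jret P π r γ ρ = W 0 := by
    rw [Jret_eq_sum_V P π r γ ρ rmax hP hπ hγ0 hγ1 hr]
    rfl
  have hJ' : Jret P' π r γ ρ = ∑' t : ℕ, γ ^ t * expReward P' π r (marginal P' π ρ t) := rfl
  calc Jret P' π r γ ρ - Jret P π r γ ρ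
      = (∑' t : ℕ, γ ^ t * expReward P' π r (marginal P' π ρ t))
        + ∑' t : ℕ, (γ ^ (t + 1) * W (t + 1) - γ ^ t * W t) := by
        rw [htel, hJP, hJ']; ring
    _ = ∑' t : ℕ, (γ ^ t * expReward P' π r (marginal P' π ρ t)
          + (γ ^ (t + 1) * W (t + 1) - γ ^ t * W t)) :=
        (Summable.tsum_add hE'sum (hg1.sub hg)).symm
    _ = _ := by
        refine tsum_congr fun t => ?_
        rw [hinner t]
        ring
end

section
/- (RTO surrogate bound, Theorem 3) Let Δ^{P',P_φ}(π) = J(P',π) - J(P_φ,π) and define L_{φ'}(φ) = Σ_{t=0}^∞ γ^t E_{(s_t,a_t)∼(P',π)}[ E_{s_{t+1}∼P'}[r_t + γ V^{P_{φ'},π}(s_{t+1})] - E_{s_{t+1}∼P_φ}[r_t + γ V^{P_{φ'},π}(s_{t+1})] ]. Then |Δ^{P',P_φ}(π)| ≤ |L_{φ'}(φ)| + (4γ δ₁ r_max/(1-γ)²) · min( δ₁(γ²+1)/(1-γ), 1 ), where δ₁ = max_{s,a} D_TV(P'(·|s,a), P_φ(·|s,a)) (and the TV distance between P_φ and P_{φ'}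 is bounded by δ₁ as well). -/
open scoped BigOperators

variable {S A : Type*}

/-
The simulation lemma writes `J(P', π) - J(P, π)` as the expected discounted sum, along the
`P'`-trajectory, of the backup gap `E_{P'}[r + γ V^P] - E_P[r + γ V^P]`; it follows by
telescoping `γ^t E_{μ_t}[V^P]` with the Bellman equation for `V^P`. With `P = P_φ` this is
`L_{φ'}(φ)` except that `V^{P_φ}` stands in place of `V^{P_{φ'}}`. Swapping the value function
changes each backup gap by `γ Σ (P' - P_φ)(V^{P_φ} - V^{P_{φ'}})`, at most
`2 γ δ₁ ‖V^{P_φ} - V^{P_{φ'}}‖_∞`, and the simulation lemma started from a point mass bounds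
`‖V^{P_φ} - V^{P_{φ'}}‖_∞` by `min (2 δ₁ r_max / (1 - γ)², 2 r_max / (1 - γ))`.
-/

open Finset

section Distribution

variable {ι : Type*} [Fintype ι] {w p q x : ι → ℝ} {c δ : ℝ}

lemma IsDist.nonempty (hw : IsDist w) : Nonempty ι := by
  by_contra h
  simpa [not_nonempty_iff.mp h] using hw.2

lemma IsDist.single [DecidableEq ι] (i : ι) : IsDist (Pi.single i 1 : ι → ℝ) :=
  ⟨fun j => by by_cases h : j = i <;> simp [h], by simp⟩

lemma IsDist.abs_sum_mul_le (hw : IsDist w) (hx : ∀ i, |x i| ≤ c) : |∑ i, w i * x i| ≤ c :=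
  calc |∑ i, w i * x i| ≤ ∑ i, w i * c := by
        refine (abs_sum_le_sum_abs _ _).trans (sum_le_sum fun i _ => ?_)
        rw [abs_mul, abs_of_nonneg (hw.1 i)]
        exact mul_le_mul_of_nonneg_left (hx i) (hw.1 i)
    _ = c := by rw [← sum_mul, hw.2, one_mul]

lemma abs_sum_sub_mul_le_of_tv_le [Nonempty ι] (hδ : 1 / 2 * ∑ i, |p i - q i| ≤ δ)
    (hx : ∀ i, |x i| ≤ c) : |∑ i, (p i - q i) * x i| ≤ 2 * δ * c := by
  have hc : 0 ≤ c := (abs_nonneg _).trans (hx (Classical.arbitrary ι))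
  calc |∑ i, (p i - q i) * x i| ≤ ∑ i, |p i - q i| * c := by
        refine (abs_sum_le_sum_abs _ _).trans (sum_le_sum fun i _ => ?_)
        rw [abs_mul]
        exact mul_le_mul_of_nonneg_left (hx i) (abs_nonneg _)
    _ ≤ 2 * δ * c := by
        rw [← sum_mul]
        exact mul_le_mul_of_nonneg_right (by linarith) hc

end Distribution

section Geometric

variable {g : ℕ → ℝ} {γ c : ℝ}

lemma norm_pow_mul_le_pow_mul (hγ0 : 0 ≤ γ) (hg : ∀ t, |g t| ≤ c) (t : ℕ) : ‖γ ^ t * g t‖ ≤ γ ^ t * c := by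
  rw [Real.norm_eq_abs, abs_mul, abs_of_nonneg (pow_nonneg hγ0 t)]
  exact mul_le_mul_of_nonneg_left (hg t) (pow_nonneg hγ0 t)

lemma summable_pow_mul_of_abs_le (hγ0 : 0 ≤ γ) (hγ1 : γ < 1) (hg : ∀ t, |g t| ≤ c) :
    Summable fun t => γ ^ t * g t :=
  .of_norm_bounded ((summable_geometric_of_lt_one hγ0 hγ1).mul_right c) (norm_pow_mul_le_pow_mul hγ0 hg)

lemma abs_tsum_pow_mul_le (hγ0 : 0 ≤ γ) (hγ1 : γ < 1) (hg : ∀ t, |g t| ≤ c) :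
    |∑' t, γ ^ t * g t| ≤ c / (1 - γ) := by
  rw [← Real.norm_eq_abs, div_eq_inv_mul]
  exact tsum_of_norm_bounded ((hasSum_geometric_of_lt_one hγ0 hγ1).mul_right c)
    (norm_pow_mul_le_pow_mul hγ0 hg)

lemma abs_add_mul_le_div {x y R : ℝ} (hγ0 : 0 ≤ γ) (hγ1 : γ < 1) (hx : |x| ≤ R)
    (hy : |y| ≤ R / (1 - γ)) : |x + γ * y| ≤ R / (1 - γ) := by
  have hR : R + γ * (R / (1 - γ)) = R / (1 - γ) := by field_simp [(sub_pos.2 hγ1).ne']; ring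
  have hγy : γ * |y| ≤ γ * (R / (1 - γ)) := mul_le_mul_of_nonneg_left hy hγ0
  have h := abs_add_le x (γ * y)
  rw [abs_mul, abs_of_nonneg hγ0] at h
  linarith

end Geometric

section MarkovDecisionProcess

variable [Fintype S] {P P' : S → A → S → ℝ} {π : S → A → ℝ} {r : S → A → S → ℝ}
  {γ : ℝ} {ρ : S → ℝ}

noncomputable def bellmanBackup (P : S → A → S → ℝ) (r : S → A → S → ℝ) (γ : ℝ) (V : S → ℝ)
    (s : S) (a : A) : ℝ :=
  ∑ s', P s a s' * (r s a s' + γ * V s')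

noncomputable def backupGap (P' P : S → A → S → ℝ) (r : S → A → S → ℝ) (γ : ℝ) (V : S → ℝ)
    (s : S) (a : A) : ℝ :=
  bellmanBackup P' r γ V s a - bellmanBackup P r γ V s a

section BackupGap

variable {V W : S → ℝ}

lemma backupGap_eq_sum (s : S) (a : A) :
    backupGap P' P r γ V s a = ∑ s', (P' s a s' - P s a s') * (r s a s' + γ * V s') := by
  simp only [backupGap, bellmanBackup, ← sum_sub_distrib, sub_mul]

lemma backupGap_sub_backupGap (s : S) (a : A) :
    backupGap P' P r γ V s a - backupGap P' P r γ W s a =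
      γ * ∑ s', (P' s a s' - P s a s') * (V s' - W s') := by
  simp only [backupGap_eq_sum, ← sum_sub_distrib, mul_sum]
  exact sum_congr rfl fun s' _ => by ring

lemma abs_backupGap_le {δ c : ℝ} {s : S} {a : A}
    (hδ : 1 / 2 * ∑ s', |P' s a s' - P s a s'| ≤ δ) (hc : ∀ s', |r s a s' + γ * V s'| ≤ c) :
    |backupGap P' P r γ V s a| ≤ 2 * δ * c :=
  have : Nonempty S := ⟨s⟩
  backupGap_eq_sum (P' := P') s a ▸ abs_sum_sub_mul_le_of_tv_le hδ hc

lemma abs_backupGap_sub_backupGap_le {δ B : ℝ} {s : S} {a : A} (hγ0 : 0 ≤ γ)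
    (hδ : 1 / 2 * ∑ s', |P' s a s' - P s a s'| ≤ δ) (hVW : ∀ s', |V s' - W s'| ≤ B) :
    |backupGap P' P r γ V s a - backupGap P' P r γ W s a| ≤ γ * (2 * δ * B) := by
  have : Nonempty S := ⟨s⟩
  rw [backupGap_sub_backupGap, abs_mul, abs_of_nonneg hγ0]
  exact mul_le_mul_of_nonneg_left (abs_sum_sub_mul_le_of_tv_le hδ hVW) hγ0

end BackupGap

variable [Fintype A]

noncomputable def occupancySum (P : S → A → S → ℝ) (π : S → A → ℝ) (γ : ℝ) (ρ : S → ℝ)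
    (f : S → A → ℝ) : ℝ :=
  ∑' t : ℕ, γ ^ t * ∑ s, marginal P π ρ t s * ∑ a, π s a * f s a

lemma sum_stepMarginal_mul (μ V : S → ℝ) :
    ∑ s', stepMarginal P π μ s' * V s' = ∑ s, μ s * ∑ a, π s a * ∑ s', P s a s' * V s' := by
  simp only [stepMarginal, sum_mul, mul_sum, mul_assoc]
  rw [sum_comm]
  refine sum_congr rfl fun s _ => ?_
  rw [sum_comm]

lemma marginal_isDist (hP : IsKernel P) (hπ : IsPolicy π) (hρ : IsDist ρ) (t : ℕ) :
    IsDist (marginal P π ρ t) := by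
  induction t with
  | zero => exact hρ
  | succ t ih =>
    refine ⟨fun s' => sum_nonneg fun s _ => mul_nonneg (ih.1 s)
      (sum_nonneg fun a _ => mul_nonneg ((hπ s).1 a) ((hP s a).1 s')), ?_⟩
    have h := sum_stepMarginal_mul (P := P) (π := π) (marginal P π ρ t) fun _ => 1
    simpa only [mul_one, (hP _ _).2, (hπ _).2, ih.2, marginal] using h

lemma marginal_succ' (ρ : S → ℝ) (t : ℕ) :
    marginal P π ρ (t + 1) = marginal P π (stepMarginal P π ρ) t := by
  induction t with
  | zero => rfl
  | succ t ih => rw [marginal, ih]; rfl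

lemma marginal_eq_sum_single [DecidableEq S] (ρ : S → ℝ) (t : ℕ) (s : S) :
    marginal P π ρ t s = ∑ s₀, ρ s₀ * marginal P π (Pi.single s₀ 1) t s := by
  induction t generalizing s with
  | zero => simp [marginal, Pi.single_apply]
  | succ t ih =>
    simp only [marginal, stepMarginal, ih, sum_mul]
    rw [sum_comm]
    simp only [mul_assoc, ← mul_sum]

lemma sum_marginal_mul_eq_sum_single [DecidableEq S] (ρ g : S → ℝ) (t : ℕ) :
    ∑ s, marginal P π ρ t s * g s = ∑ s₀, ρ s₀ * ∑ s, marginal P π (Pi.single s₀ 1) t s * g s := by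
  simp only [marginal_eq_sum_single ρ t, sum_mul, mul_sum, mul_assoc]
  exact sum_comm

lemma sum_mul_sum_bellmanBackup (μ V : S → ℝ) :
    ∑ s, μ s * ∑ a, π s a * bellmanBackup P r γ V s a =
      expReward P π r μ + γ * ∑ s', stepMarginal P π μ s' * V s' := by
  simp only [sum_stepMarginal_mul, expReward, bellmanBackup, mul_add, sum_add_distrib, mul_sum]
  congr 1
  refine sum_congr rfl fun s _ => sum_congr rfl fun a _ => sum_congr rfl fun s' _ => by ring

section Occupancy

variable (hP : IsKernel P) (hπ : IsPolicy π) (hρ : IsDist ρ) (hγ0 : 0 ≤ γ) (hγ1 : γ < 1)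
include hP hπ hρ

lemma abs_sum_marginal_mul_sum_le {f : S → A → ℝ} {c : ℝ} (hf : ∀ s a, |f s a| ≤ c) (t : ℕ) :
    |∑ s, marginal P π ρ t s * ∑ a, π s a * f s a| ≤ c :=
  (marginal_isDist hP hπ hρ t).abs_sum_mul_le fun s => IsDist.abs_sum_mul_le (hπ s) (hf s)

include hγ0 hγ1

lemma summable_occupancy (f : S → A → ℝ) :
    Summable fun t => γ ^ t * ∑ s, marginal P π ρ t s * ∑ a, π s a * f s a := by
  obtain ⟨c, hc⟩ := Finite.exists_le fun x : S × A => |f x.1 x.2|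
  exact summable_pow_mul_of_abs_le hγ0 hγ1
    (abs_sum_marginal_mul_sum_le hP hπ hρ fun s a => hc (s, a))

lemma abs_occupancySum_le {f : S → A → ℝ} {c : ℝ} (hf : ∀ s a, |f s a| ≤ c) :
    |occupancySum P π γ ρ f| ≤ c / (1 - γ) :=
  abs_tsum_pow_mul_le hγ0 hγ1 (abs_sum_marginal_mul_sum_le hP hπ hρ hf)

lemma occupancySum_sub (f g : S → A → ℝ) :
    occupancySum P π γ ρ (fun s a => f s a - g s a) =
      occupancySum P π γ ρ f - occupancySum P π γ ρ g := by
  rw [occupancySum, occupancySum, occupancySum,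
    ← (summable_occupancy hP hπ hρ hγ0 hγ1 f).tsum_sub (summable_occupancy hP hπ hρ hγ0 hγ1 g)]
  simp only [mul_sub, sum_sub_distrib]

lemma Jret_eq_expReward_add :
    Jret P π r γ ρ = expReward P π r ρ + γ * Jret P π r γ (stepMarginal P π ρ) := by
  rw [Jret, Summable.tsum_eq_zero_add (f := fun t => γ ^ t * expReward P π r (marginal P π ρ t))
    (summable_occupancy hP hπ hρ hγ0 hγ1 _), Jret, ← tsum_mul_left]
  simp only [pow_zero, one_mul, marginal_succ', pow_succ]
  congr 1
  exact tsum_congr fun t => by ring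

end Occupancy

lemma abs_Jret_le {rmax : ℝ} (hP : IsKernel P) (hπ : IsPolicy π) (hρ : IsDist ρ) (hγ0 : 0 ≤ γ)
    (hγ1 : γ < 1) (hr : ∀ s a s', |r s a s'| ≤ rmax) : |Jret P π r γ ρ| ≤ rmax / (1 - γ) :=
  abs_occupancySum_le hP hπ hρ hγ0 hγ1 fun s a => IsDist.abs_sum_mul_le (hP s a) (hr s a)

section Value

variable [DecidableEq S] (hP : IsKernel P) (hπ : IsPolicy π) (hγ0 : 0 ≤ γ) (hγ1 : γ < 1)

lemma Vval_eq_Jret_single (s : S) : Vval P π r γ s = Jret P π r γ (Pi.single s 1) := by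
  unfold Vval
  congr 1
  ext s'
  simp [Pi.single_apply]

include hP hπ hγ0 hγ1

lemma Jret_eq_sum_Vval (ρ : S → ℝ) : Jret P π r γ ρ = ∑ s₀, ρ s₀ * Vval P π r γ s₀ := by
  have hterm : ∀ t, γ ^ t * expReward P π r (marginal P π ρ t) =
      ∑ s₀, ρ s₀ * (γ ^ t * expReward P π r (marginal P π (Pi.single s₀ 1) t)) := by
    intro t
    rw [expReward, sum_marginal_mul_eq_sum_single, mul_sum]
    exact sum_congr rfl fun s₀ _ => by rw [expReward]; ring
  rw [Jret, tsum_congr hterm, Summable.tsum_finsetSum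
    (f := fun s₀ t => ρ s₀ * (γ ^ t * expReward P π r (marginal P π (Pi.single s₀ 1) t)))
    fun s₀ _ => (summable_occupancy hP hπ (IsDist.single s₀) hγ0 hγ1 _).mul_left _]
  simp only [tsum_mul_left, Vval_eq_Jret_single, Jret]

lemma Vval_eq_sum_bellmanBackup (s : S) :
    Vval P π r γ s = ∑ a, π s a * bellmanBackup P r γ (Vval P π r γ) s a := by
  have h := sum_mul_sum_bellmanBackup (P := P) (π := π) (r := r) (γ := γ) (Pi.single s 1)
    (Vval P π r γ)
  rw [Vval_eq_Jret_single, Jret_eq_expReward_add hP hπ (IsDist.single s) hγ0 hγ1,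
    Jret_eq_sum_Vval hP hπ hγ0 hγ1, ← h]
  simp [Pi.single_apply]

lemma abs_Vval_le {rmax : ℝ} (hr : ∀ s a s', |r s a s'| ≤ rmax) (s : S) :
    |Vval P π r γ s| ≤ rmax / (1 - γ) :=
  Vval_eq_Jret_single (P := P) s ▸ abs_Jret_le hP hπ (IsDist.single s) hγ0 hγ1 hr

end Value

section Simulation

variable [DecidableEq S] (hP' : IsKernel P') (hP : IsKernel P) (hπ : IsPolicy π)
  (hγ0 : 0 ≤ γ) (hγ1 : γ < 1)
include hP' hP hπ hγ0 hγ1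

theorem Jret_sub_Jret_eq_occupancySum (hρ : IsDist ρ) :
    Jret P' π r γ ρ - Jret P π r γ ρ =
      occupancySum P' π γ ρ (backupGap P' P r γ (Vval P π r γ)) := by
  set V := Vval P π r γ
  set u : ℕ → ℝ := fun t => γ ^ t * ∑ s, marginal P' π ρ t s * V s
  have hu : Summable u := by
    obtain ⟨c, hc⟩ := Finite.exists_le fun s => |V s|
    exact summable_pow_mul_of_abs_le hγ0 hγ1 fun t =>
      (marginal_isDist hP' hπ hρ t).abs_sum_mul_le hc
  have hterm : ∀ t, γ ^ t * ∑ s, marginal P' π ρ t s * ∑ a, π s a * backupGap P' P r γ V s a =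
      γ ^ t * expReward P' π r (marginal P' π ρ t) + (u (t + 1) - u t) := by
    intro t
    simp only [backupGap, mul_sub, sum_sub_distrib, sum_mul_sum_bellmanBackup,
      ← Vval_eq_sum_bellmanBackup hP hπ hγ0 hγ1, u, V, marginal, pow_succ]
    ring
  rw [occupancySum, tsum_congr hterm,
    Summable.tsum_add (f := fun t => γ ^ t * expReward P' π r (marginal P' π ρ t))
      (summable_occupancy hP' hπ hρ hγ0 hγ1 _) (((summable_nat_add_iff 1).2 hu).sub hu),
    ((summable_nat_add_iff 1).2 hu).tsum_sub hu, hu.tsum_eq_zero_add,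
    Jret_eq_sum_Vval hP hπ hγ0 hγ1 ρ]
  simp only [u, pow_zero, one_mul, marginal, Jret]
  ring

lemma abs_Vval_sub_Vval_le {rmax δ : ℝ} (hr : ∀ s a s', |r s a s'| ≤ rmax)
    (hδ : ∀ s a, 1 / 2 * ∑ s', |P' s a s' - P s a s'| ≤ δ) (s : S) :
    |Vval P' π r γ s - Vval P π r γ s| ≤ 2 * δ * rmax / (1 - γ) ^ 2 := by
  rw [Vval_eq_Jret_single, Vval_eq_Jret_single,
    Jret_sub_Jret_eq_occupancySum hP' hP hπ hγ0 hγ1 (IsDist.single s)]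
  calc _ ≤ 2 * δ * (rmax / (1 - γ)) / (1 - γ) :=
        abs_occupancySum_le hP' hπ (IsDist.single s) hγ0 hγ1 fun s a =>
          abs_backupGap_le (hδ s a) fun s' =>
            abs_add_mul_le_div hγ0 hγ1 (hr s a s') (abs_Vval_le hP hπ hγ0 hγ1 hr s')
    _ = 2 * δ * rmax / (1 - γ) ^ 2 := by rw [mul_div_assoc', div_div, ← sq]

end Simulation

end MarkovDecisionProcess

lemma rto_error_term_le {γ δ R : ℝ} (hγ0 : 0 ≤ γ) (hγ1 : γ < 1) (hδ : 0 ≤ δ) (hR : 0 ≤ R) :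
    γ * (2 * δ * min (2 * δ * R / (1 - γ) ^ 2) (2 * (R / (1 - γ)))) / (1 - γ) ≤
      4 * γ * δ * R / (1 - γ) ^ 2 * min (δ * (γ ^ 2 + 1) / (1 - γ)) 1 := by
  have h1γ : 0 < 1 - γ := sub_pos.2 hγ1
  have hC : 0 ≤ 4 * γ * δ * R / (1 - γ) ^ 2 := by positivity
  rw [mul_min_of_nonneg _ _ hC]
  refine le_min ?_ ?_
  · calc _ ≤ γ * (2 * δ * (2 * δ * R / (1 - γ) ^ 2)) / (1 - γ) := by gcongr; exact min_le_left _ _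
      _ = 4 * γ * δ * R / (1 - γ) ^ 2 * (δ / (1 - γ)) := by ring
      _ ≤ _ := by gcongr; nlinarith [sq_nonneg γ]
  · calc _ ≤ γ * (2 * δ * (2 * (R / (1 - γ)))) / (1 - γ) := by gcongr; exact min_le_right _ _
      _ = _ := by field_simp; ring

/-- RTO surrogate bound, Theorem 3:
`|Δ^{P',P_φ}(π)| ≤ |L_{φ'}(φ)| + (4γδ₁r_max/(1-γ)²)·min(δ₁(γ²+1)/(1-γ), 1)`. -/
theorem rto_bound [Fintype S] [Fintype A] [DecidableEq S]
    (P' Pφ Pφ' : S → A → S → ℝ) (π : S → A → ℝ) (r : S → A → S → ℝ) (γ : ℝ) (ρ : S → ℝ)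
    (rmax δ₁ : ℝ)
    (hP' : IsKernel P') (hPφ : IsKernel Pφ) (hPφ' : IsKernel Pφ') (hπ : IsPolicy π)
    (hρ : IsDist ρ)
    (hγ0 : 0 ≤ γ) (hγ1 : γ < 1)
    (hr : ∀ s a s', |r s a s'| ≤ rmax)
    (hδ₁ : ∀ s a, (1 / 2) * ∑ s', |P' s a s' - Pφ s a s'| ≤ δ₁)
    (hδ₁' : ∀ s a, (1 / 2) * ∑ s', |Pφ s a s' - Pφ' s a s'| ≤ δ₁) :
    |Jret P' π r γ ρ - Jret Pφ π r γ ρ| ≤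
      |∑' t : ℕ, γ ^ t * ∑ s, marginal P' π ρ t s * ∑ a, π s a *
          ((∑ s', P' s a s' * (r s a s' + γ * Vval Pφ' π r γ s')) -
            ∑ s', Pφ s a s' * (r s a s' + γ * Vval Pφ' π r γ s'))| +
      4 * γ * δ₁ * rmax / (1 - γ) ^ 2 * min (δ₁ * (γ ^ 2 + 1) / (1 - γ)) 1 := by
  obtain ⟨s₀⟩ := hρ.nonempty
  obtain ⟨a₀⟩ := IsDist.nonempty (hπ s₀)
  have hrmax : 0 ≤ rmax := (abs_nonneg _).trans (hr s₀ a₀ s₀)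
  have hδ₁0 : 0 ≤ δ₁ := le_trans (by positivity) (hδ₁ s₀ a₀)
  have hVφ := abs_Vval_le hPφ hπ hγ0 hγ1 hr
  have hVφ' := abs_Vval_le hPφ' hπ hγ0 hγ1 hr
  have hgap : ∀ s, |Vval Pφ π r γ s - Vval Pφ' π r γ s| ≤
      min (2 * δ₁ * rmax / (1 - γ) ^ 2) (2 * (rmax / (1 - γ))) := fun s =>
    le_min (abs_Vval_sub_Vval_le hPφ hPφ' hπ hγ0 hγ1 hr hδ₁' s)
      ((abs_sub _ _).trans (by linarith [hVφ s, hVφ' s]))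
  have hswap := abs_occupancySum_le hP' hπ hρ hγ0 hγ1 fun s a =>
    abs_backupGap_sub_backupGap_le (r := r) hγ0 (hδ₁ s a) hgap
  rw [occupancySum_sub hP' hπ hρ hγ0 hγ1] at hswap
  rw [Jret_sub_Jret_eq_occupancySum hP' hPφ hπ hγ0 hγ1 hρ]
  show _ ≤ |occupancySum P' π γ ρ (backupGap P' Pφ r γ (Vval Pφ' π r γ))| + _
  linarith [rto_error_term_le hγ0 hγ1 hδ₁0 hrmax, abs_sub_abs_le_abs_sub
    (occupancySum P' π γ ρ (backupGap P' Pφ r γ (Vval Pφ π r γ)))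
    (occupancySum P' π γ ρ (backupGap P' Pφ r γ (Vval Pφ' π r γ)))]
end
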